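/- For every k ≥ 1 and every μ ⊆ {1, …, 2k}, there exist ε ∈ {1, i} ⊆ ℤ[i]/2ℤ[i] and a composition σ = S_k ∘ ⋯ ∘ S_1 of permutations of {0, …, 2^k−1} with each S_l ∈ {identity, A_{2^{l−1}}}, such that for every vector v ∈ (ℤ[i]/2ℤ[i])^{2^k} and every index m ∈ {0, …, 2^k−1}, ((ρₖ(e_μ) mod 2ℤ[i])·v)(m) = ε·v(σ(m)). Moreover, distinct pairs (ε, σ) determine distinct maps on (ℤ[i]/2ℤ[i])^{2^k}, so this correspondence is a bijection from the 2^{k+1} distinct mod-2 reductions of the matrices ρₖ(e_μ) onto the 2^{k+1} pairs (ε, σ). -/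

import Mathlib

open Matrix

namespace DiracSpinor

/-- The Gaussian integer `i`. -/
def gi : GaussianInt := ⟨0, 1⟩

/-- `E₁ = [[i,0],[0,−i]]`. -/
def E1 : Matrix (Fin 2) (Fin 2) GaussianInt := !![gi, 0; 0, -gi]

/-- `E₂ = [[0,i],[i,0]]`. -/
def E2 : Matrix (Fin 2) (Fin 2) GaussianInt := !![0, gi; gi, 0]

/-- `B = [[0,−i],[i,0]]`. -/
def Bm : Matrix (Fin 2) (Fin 2) GaussianInt := !![0, -gi; gi, 0]

/-- The 2×2 identity matrix. -/
def I2 : Matrix (Fin 2) (Fin 2) GaussianInt := 1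

/-- Kronecker product of square matrices, with the standard identification of the
index set `Fin m × Fin n` with `Fin (m*n)`. -/
def kron {m n : ℕ} (A : Matrix (Fin m) (Fin m) GaussianInt)
    (B : Matrix (Fin n) (Fin n) GaussianInt) :
    Matrix (Fin (m * n)) (Fin (m * n)) GaussianInt :=
  Matrix.reindex finProdFinEquiv finProdFinEquiv (Matrix.kroneckerMap (· * ·) A B)

/-- Iterated Kronecker power `A^{⊗t}`. -/
def kronPow (A : Matrix (Fin 2) (Fin 2) GaussianInt) :
    (t : ℕ) → Matrix (Fin (2 ^ t)) (Fin (2 ^ t)) GaussianInt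
  | 0 => 1
  | t + 1 => Matrix.reindex (finCongr (pow_succ 2 t).symm) (finCongr (pow_succ 2 t).symm)
      (kron (kronPow A t) A)

theorem sizeEq (k : ℕ) (i : Fin (2 * k)) :
    2 ^ (k - 1 - i.val / 2) * 2 * 2 ^ (i.val / 2) = 2 ^ k := by
  have h1 : i.val < 2 * k := i.isLt
  have h2 : (k - 1 - i.val / 2) + 1 + i.val / 2 = k := by omega
  calc 2 ^ (k - 1 - i.val / 2) * 2 * 2 ^ (i.val / 2)
      = 2 ^ ((k - 1 - i.val / 2) + 1 + i.val / 2) := by rw [pow_add, pow_add, pow_one]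
    _ = 2 ^ k := by rw [h2]

/-- `rhoVec k i` is `ρₖ(e_{i+1})`, the matrix representing the `(i+1)`-st vector generator
(`i : Fin (2*k)` is 0-based, so `i = 2j-2` encodes `e_{2j-1}` and `i = 2j-1` encodes `e_{2j}`):
`ρₖ(e_{2j−1}) = I₂^{⊗(k−j)} ⊗ E₁ ⊗ B^{⊗(j−1)}` and `ρₖ(e_{2j}) = I₂^{⊗(k−j)} ⊗ E₂ ⊗ B^{⊗(j−1)}`. -/
def rhoVec (k : ℕ) (i : Fin (2 * k)) : Matrix (Fin (2 ^ k)) (Fin (2 ^ k)) GaussianInt :=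
  Matrix.reindex (finCongr (sizeEq k i)) (finCongr (sizeEq k i))
    (kron (kron (kronPow I2 (k - 1 - i.val / 2)) (if i.val % 2 = 0 then E1 else E2))
      (kronPow Bm (i.val / 2)))

/-- `rho k μ` is `ρₖ(e_μ)`: the product of the `ρₖ(e_i)` for `i ∈ μ` taken in increasing order
(`μ : Finset (Fin (2*k))` is the 0-based version of a subset of `{1, …, 2k}`). -/
def rho (k : ℕ) (μ : Finset (Fin (2 * k))) : Matrix (Fin (2 ^ k)) (Fin (2 ^ k)) GaussianInt :=
  ((μ.sort (· ≤ ·)).map (rhoVec k)).prod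

/-- The quotient ring `ℤ[i]/2ℤ[i]`. -/
abbrev Rbar : Type := GaussianInt ⧸ Ideal.span ({2} : Set GaussianInt)

/-- Reduction `ℤ[i] → ℤ[i]/2ℤ[i]`. -/
def red : GaussianInt →+* Rbar := Ideal.Quotient.mk _

/-- `rhoBar k μ` is the entrywise reduction of `ρₖ(e_μ)` mod `2ℤ[i]`. -/
def rhoBar (k : ℕ) (μ : Finset (Fin (2 * k))) : Matrix (Fin (2 ^ k)) (Fin (2 ^ k)) Rbar :=
  (rho k μ).map red

/-- The shape of a matrix: the 0–1 matrix recording the positions of nonzero entries. -/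
def Sh {n : ℕ} (M : Matrix (Fin n) (Fin n) GaussianInt) : Matrix (Fin n) (Fin n) GaussianInt :=
  Matrix.of fun r s => if M r s = 0 then 0 else 1

/-- A matrix has real type if all its nonzero entries lie in `{1, −1}`. -/
def RealType {n : ℕ} (M : Matrix (Fin n) (Fin n) GaussianInt) : Prop :=
  ∀ r s, M r s ≠ 0 → M r s = 1 ∨ M r s = -1

/-- A matrix has imaginary type if all its nonzero entries lie in `{i, −i}`. -/
def ImagType {n : ℕ} (M : Matrix (Fin n) (Fin n) GaussianInt) : Prop :=
  ∀ r s, M r s ≠ 0 → M r s = gi ∨ M r s = -gi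



/-- The underlying function of the switch permutation `A_{2^j}`:
writing `m = q·2^{j+1} + r` with `r < 2^{j+1}`, it returns `q·2^{j+1} + ((r + 2^j) mod 2^{j+1})`. -/
def switchAux (j m : ℕ) : ℕ :=
  2 ^ (j + 1) * (m / 2 ^ (j + 1)) + (m % 2 ^ (j + 1) + 2 ^ j) % 2 ^ (j + 1)

theorem switchAux_lt {k j m : ℕ} (hj : j < k) (hm : m < 2 ^ k) : switchAux j m < 2 ^ k := by
  unfold switchAux
  have hP : 0 < 2 ^ (j + 1) := by positivity
  have h2 : (m % 2 ^ (j + 1) + 2 ^ j) % 2 ^ (j + 1) < 2 ^ (j + 1) := Nat.mod_lt _ hP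
  have hdvd : 2 ^ (j + 1) ∣ 2 ^ k := pow_dvd_pow 2 (by omega)
  have hdiv : m / 2 ^ (j + 1) < 2 ^ k / 2 ^ (j + 1) :=
    Nat.div_lt_div_of_lt_of_dvd hdvd hm
  have hle : 2 ^ (j + 1) * (m / 2 ^ (j + 1)) + 2 ^ (j + 1) ≤
      2 ^ (j + 1) * (2 ^ k / 2 ^ (j + 1)) := by
    calc 2 ^ (j + 1) * (m / 2 ^ (j + 1)) + 2 ^ (j + 1)
        = 2 ^ (j + 1) * (m / 2 ^ (j + 1) + 1) := by ring
      _ ≤ 2 ^ (j + 1) * (2 ^ k / 2 ^ (j + 1)) :=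
          Nat.mul_le_mul_left _ (Nat.succ_le_of_lt hdiv)
  have hk2 : 2 ^ (j + 1) * (2 ^ k / 2 ^ (j + 1)) = 2 ^ k := Nat.mul_div_cancel' hdvd
  omega

theorem switchAux_invol (j m : ℕ) : switchAux j (switchAux j m) = m := by
  unfold switchAux
  have hP : 0 < 2 ^ (j + 1) := by positivity
  set P := 2 ^ (j + 1) with hPdef
  have hPj : 2 ^ j + 2 ^ j = P := by rw [hPdef, pow_succ]; ring
  have hr : (P * (m / P) + (m % P + 2 ^ j) % P) % P = (m % P + 2 ^ j) % P := by
    rw [Nat.add_comm, Nat.add_mul_mod_self_left, Nat.mod_mod_of_dvd _ dvd_rfl]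
  have hq : (P * (m / P) + (m % P + 2 ^ j) % P) / P = m / P := by
    rw [Nat.add_comm, Nat.add_mul_div_left _ _ hP, Nat.div_eq_of_lt (Nat.mod_lt _ hP), zero_add]
  rw [hr, hq]
  have h3 : ((m % P + 2 ^ j) % P + 2 ^ j) % P = m % P := by
    rw [Nat.mod_add_mod, add_assoc, hPj, Nat.add_mod_right, Nat.mod_mod_of_dvd _ dvd_rfl]
  rw [h3, Nat.div_add_mod]

/-- The switch permutation `A_{2^j}` of `{0, …, 2^k − 1}` (for `j < k`), which pairwise
interchanges consecutive blocks of size `2^j`. -/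
def switchPerm (k j : ℕ) (hj : j < k) : Equiv.Perm (Fin (2 ^ k)) where
  toFun m := ⟨switchAux j m.val, switchAux_lt hj m.isLt⟩
  invFun m := ⟨switchAux j m.val, switchAux_lt hj m.isLt⟩
  left_inv m := Fin.ext (switchAux_invol j m.val)
  right_inv m := Fin.ext (switchAux_invol j m.val)

/-- The composition `S_k ∘ ⋯ ∘ S_1` where `S_l` is the switch permutation `A_{2^{l−1}}`
if `c (l−1) = true` and the identity otherwise. -/
def cliffPerm (k : ℕ) (c : Fin k → Bool) : Equiv.Perm (Fin (2 ^ k)) :=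
  (List.ofFn (fun l : Fin k => if c l then switchPerm k l.val l.isLt else 1)).prod


/-! ### Auxiliary development -/

theorem red_eq_iff {a b : GaussianInt} : red a = red b ↔ (2 : GaussianInt) ∣ (a - b) := by
  rw [red, Ideal.Quotient.mk_eq_mk_iff_sub_mem, Ideal.mem_span_singleton]

theorem two_dvd_iff (x : GaussianInt) : (2 : GaussianInt) ∣ x ↔ (2 ∣ x.re ∧ 2 ∣ x.im) := by
  have h : (2 : GaussianInt) = ((2 : ℤ) : GaussianInt) := by norm_num
  rw [h, Zsqrtd.intCast_dvd]

theorem red_neg_gi : red (-gi) = red gi := by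
  rw [red_eq_iff, two_dvd_iff]
  constructor <;> simp [gi]

theorem giSq : red gi * red gi = 1 := by
  rw [← _root_.map_mul, ← map_one red, red_eq_iff, two_dvd_iff]
  constructor <;> simp [gi, Zsqrtd.re_mul, Zsqrtd.im_mul]

theorem one_ne_zero_Rbar : (1 : Rbar) ≠ 0 := by
  rw [← map_one red, ← map_zero red, Ne, red_eq_iff, two_dvd_iff]
  simp

theorem red_gi_ne_zero : red gi ≠ 0 := by
  rw [← map_zero red, Ne, red_eq_iff, two_dvd_iff]
  simp [gi]

theorem giPow (N : ℕ) : (red gi) ^ N = if N % 2 = 0 then 1 else red gi := by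
  conv_lhs => rw [← Nat.div_add_mod N 2, pow_add, pow_mul, pow_two, giSq, one_pow, one_mul]
  rcases Nat.mod_two_eq_zero_or_one N with h | h <;> simp [h]

theorem giPow_mem (N : ℕ) : (red gi) ^ N ∈ ({1, red gi} : Set Rbar) := by
  rw [giPow]
  rcases Nat.mod_two_eq_zero_or_one N with h | h <;> simp [h]

/-- Key xor splitting lemma. -/
theorem xor_split {b x y u v : ℕ} (hy : y < 2^b) (hv : v < 2^b) :
    (2^b * x + y) ^^^ (2^b * u + v) = 2^b * (x ^^^ u) + (y ^^^ v) := by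
  have hyv : y ^^^ v < 2^b := Nat.xor_lt_two_pow hy hv
  apply Nat.eq_of_testBit_eq
  intro j
  rw [Nat.testBit_xor, Nat.testBit_two_pow_mul_add _ hy, Nat.testBit_two_pow_mul_add _ hv,
    Nat.testBit_two_pow_mul_add _ hyv]
  by_cases h : j < b <;> simp [h, Nat.testBit_xor]

theorem divmod_eq {B x y s : ℕ} (hB : 0 < B) (hy : y < B) :
    s = B * x + y ↔ (s / B = x ∧ s % B = y) := by
  constructor
  · rintro rfl
    exact ⟨by rw [Nat.mul_add_div hB, Nat.div_eq_of_lt hy, Nat.add_zero],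
      by rw [Nat.mul_add_mod, Nat.mod_eq_of_lt hy]⟩
  · rintro ⟨h1, h2⟩
    conv_lhs => rw [← Nat.div_add_mod s B]
    rw [h1, h2]

/-- A matrix whose mod-2 reduction acts as `v ↦ ε · v (· ^^^ mask)`. -/
def GoodM {n : ℕ} (M : Matrix (Fin n) (Fin n) GaussianInt) (ε : Rbar) (mask : ℕ) : Prop :=
  ∀ r s : Fin n, red (M r s) = if (s : ℕ) = (r : ℕ) ^^^ mask then ε else 0

theorem goodM_one {n : ℕ} : GoodM (1 : Matrix (Fin n) (Fin n) GaussianInt) 1 0 := by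
  intro r s
  rw [Matrix.one_apply]
  by_cases h : r = s
  · simp [h]
  · rw [if_neg h, if_neg (by simpa [Nat.xor_zero, Fin.val_inj, eq_comm] using h), map_zero]

theorem goodM_E1 : GoodM E1 (red gi) 0 := by
  intro r s
  fin_cases r <;> fin_cases s <;> simp [E1, red_neg_gi]

theorem goodM_E2 : GoodM E2 (red gi) 1 := by
  intro r s
  fin_cases r <;> fin_cases s <;> simp [E2]

theorem goodM_Bm : GoodM Bm (red gi) 1 := by
  intro r s
  fin_cases r <;> fin_cases s <;> simp [Bm, red_neg_gi]

theorem goodM_reindex {n n' : ℕ} (h : n = n')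
    {M : Matrix (Fin n) (Fin n) GaussianInt} {ε : Rbar} {mask : ℕ} (hM : GoodM M ε mask) :
    GoodM (Matrix.reindex (finCongr h) (finCongr h) M) ε mask := by
  intro r s
  rw [Matrix.reindex_apply, Matrix.submatrix_apply]
  simpa using hM ((finCongr h).symm r) ((finCongr h).symm s)

theorem goodM_kron {M' n b : ℕ} (hn : n = 2^b)
    {A : Matrix (Fin M') (Fin M') GaussianInt} {B : Matrix (Fin n) (Fin n) GaussianInt}
    {ε₁ ε₂ : Rbar} {m₁ m₂ : ℕ} (hA : GoodM A ε₁ m₁) (hB : GoodM B ε₂ m₂) (hm₂ : m₂ < 2^b) :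
    GoodM (kron A B) (ε₁ * ε₂) (2^b * m₁ + m₂) := by
  subst hn
  intro r s
  have hk : kron A B r s = A r.divNat s.divNat * B r.modNat s.modNat := by
    simp [kron, Matrix.reindex_apply, Matrix.submatrix_apply, finProdFinEquiv,
      Matrix.kroneckerMap_apply]
  rw [hk, _root_.map_mul, hA, hB]
  have hP : 0 < 2^b := Nat.two_pow_pos b
  have hrd : (r.divNat : ℕ) = (r : ℕ) / 2^b := rfl
  have hrm : (r.modNat : ℕ) = (r : ℕ) % 2^b := rfl
  have hsd : (s.divNat : ℕ) = (s : ℕ) / 2^b := rfl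
  have hsm : (s.modNat : ℕ) = (s : ℕ) % 2^b := rfl
  have hxor : (r : ℕ) ^^^ (2^b * m₁ + m₂)
      = 2^b * ((r : ℕ) / 2^b ^^^ m₁) + ((r : ℕ) % 2^b ^^^ m₂) := by
    conv_lhs => rw [← Nat.div_add_mod (r : ℕ) (2^b)]
    exact xor_split (Nat.mod_lt _ hP) hm₂
  have hiff : ((s : ℕ) = (r : ℕ) ^^^ (2^b * m₁ + m₂)) ↔
      (((s.divNat : ℕ) = (r.divNat : ℕ) ^^^ m₁) ∧ ((s.modNat : ℕ) = (r.modNat : ℕ) ^^^ m₂)) := by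
    rw [hxor, hrd, hrm, hsd, hsm,
      divmod_eq hP (Nat.xor_lt_two_pow (Nat.mod_lt _ hP) hm₂)]
  rw [ite_zero_mul_ite_zero]
  exact (if_congr hiff rfl rfl).symm

theorem goodM_mul {k : ℕ} {A B : Matrix (Fin (2^k)) (Fin (2^k)) GaussianInt}
    {ε₁ ε₂ : Rbar} {m₁ m₂ : ℕ} (hA : GoodM A ε₁ m₁) (hB : GoodM B ε₂ m₂) (h₁ : m₁ < 2^k) :
    GoodM (A * B) (ε₁ * ε₂) (m₁ ^^^ m₂) := by
  intro r s
  have hlt : (r : ℕ) ^^^ m₁ < 2^k := Nat.xor_lt_two_pow r.isLt h₁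
  rw [Matrix.mul_apply, map_sum]
  rw [Finset.sum_eq_single (⟨(r : ℕ) ^^^ m₁, hlt⟩ : Fin (2^k))]
  · rw [_root_.map_mul, hA, hB]
    simp only [Fin.val_mk, if_pos rfl, Nat.xor_assoc]
    by_cases hc : (s : ℕ) = (r : ℕ) ^^^ (m₁ ^^^ m₂) <;> simp [hc]
  · intro t _ ht
    rw [_root_.map_mul, hA, if_neg (fun h => ht (Fin.ext h)), zero_mul]
  · intro h
    exact absurd (Finset.mem_univ _) h

theorem goodM_I2 : GoodM I2 1 0 := goodM_one

theorem goodM_kronPow_I2 (t : ℕ) : GoodM (kronPow I2 t) 1 0 := by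
  induction t with
  | zero => exact goodM_one
  | succ t ih =>
    rw [kronPow]
    apply goodM_reindex
    have h := goodM_kron (b := 1) (by norm_num) ih goodM_I2 (by norm_num)
    simpa using h

theorem goodM_kronPow_Bm (t : ℕ) : GoodM (kronPow Bm t) ((red gi) ^ t) (2^t - 1) := by
  induction t with
  | zero => simpa [kronPow] using goodM_one
  | succ t ih =>
    rw [kronPow]
    apply goodM_reindex
    have h := goodM_kron (b := 1) (by norm_num) ih goodM_Bm (by norm_num)
    have hm : 2^1 * (2^t - 1) + 1 = 2^(t+1) - 1 := by
      have := Nat.one_le_two_pow (n := t)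
      rw [pow_succ]
      omega
    have he : (red gi) ^ t * red gi = (red gi) ^ (t + 1) := (pow_succ _ _).symm
    rw [hm, he] at h
    exact h

/-- The xor-mask of the generator `ρₖ(e_{i+1})`. -/
def gMask {k : ℕ} (i : Fin (2 * k)) : ℕ :=
  2 ^ (i.val / 2) * (i.val % 2) + (2 ^ (i.val / 2) - 1)

theorem gMask_lt {k : ℕ} (i : Fin (2 * k)) : gMask i < 2^k := by
  have h1 : i.val / 2 + 1 ≤ k := by omega
  have h2 : 2 ^ (i.val / 2 + 1) ≤ 2 ^ k := Nat.pow_le_pow_right (by norm_num) h1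
  have h3 : i.val % 2 < 2 := Nat.mod_lt _ (by norm_num)
  have h4 : (0:ℕ) < 2 ^ (i.val / 2) := Nat.two_pow_pos _
  unfold gMask
  rw [pow_succ] at h2
  have h5 : 2 ^ (i.val / 2) * (i.val % 2) ≤ 2 ^ (i.val / 2) := by
    calc 2 ^ (i.val / 2) * (i.val % 2) ≤ 2 ^ (i.val / 2) * 1 :=
          Nat.mul_le_mul_left _ (by omega)
      _ = 2 ^ (i.val / 2) := mul_one _
  omega

theorem goodM_rhoVec (k : ℕ) (i : Fin (2 * k)) :
    GoodM (rhoVec k i) ((red gi) ^ (i.val / 2 + 1)) (gMask i) := by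
  unfold rhoVec
  apply goodM_reindex
  have hE : GoodM (if i.val % 2 = 0 then E1 else E2) (red gi) (i.val % 2) := by
    rcases Nat.mod_two_eq_zero_or_one i.val with h | h <;> simp [h, goodM_E1, goodM_E2]
  have hinner := goodM_kron (b := 1) (by norm_num) (goodM_kronPow_I2 (k - 1 - i.val / 2)) hE
    (by omega)
  have houter := goodM_kron (b := i.val / 2) rfl hinner (goodM_kronPow_Bm (i.val / 2))
    (by have := Nat.one_le_two_pow (n := i.val / 2); omega)
  have hm : 2 ^ (i.val / 2) * (2^1 * 0 + i.val % 2) + (2 ^ (i.val / 2) - 1) = gMask i := by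
    simp [gMask]
  have he : 1 * red gi * (red gi) ^ (i.val / 2) = (red gi) ^ (i.val / 2 + 1) := by
    rw [one_mul, mul_comm, pow_succ]
  rw [hm, he] at houter
  exact houter

instance xorComm : Std.Commutative (α := ℕ) (· ^^^ ·) := ⟨Nat.xor_comm⟩
instance xorAssoc : Std.Associative (α := ℕ) (· ^^^ ·) := ⟨Nat.xor_assoc⟩

theorem goodM_list (k : ℕ) (L : List (Fin (2 * k))) :
    GoodM ((L.map (rhoVec k)).prod) ((red gi) ^ ((L.map (fun i => i.val / 2 + 1)).sum))
        ((L.map gMask).foldr (· ^^^ ·) 0) ∧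
      (L.map gMask).foldr (· ^^^ ·) 0 < 2^k := by
  induction L with
  | nil => exact ⟨by simpa using goodM_one, Nat.two_pow_pos k⟩
  | cons i L ih =>
    refine ⟨?_, Nat.xor_lt_two_pow (gMask_lt i) ih.2⟩
    simp only [List.map_cons, List.prod_cons, List.sum_cons, List.foldr_cons]
    rw [pow_add]
    exact goodM_mul (goodM_rhoVec k i) ih.1 (gMask_lt i)

/-- The xor-mask of `ρₖ(e_μ)`. -/
def xMask {k : ℕ} (μ : Finset (Fin (2 * k))) : ℕ := μ.fold (· ^^^ ·) 0 gMask

theorem sort_map_foldr {k : ℕ} (μ : Finset (Fin (2 * k))) :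
    ((μ.sort (· ≤ ·)).map gMask).foldr (· ^^^ ·) 0 = xMask μ := by
  rw [xMask, Finset.fold, ← Finset.sort_eq μ (· ≤ ·), Multiset.map_coe, Multiset.coe_fold_r]

theorem sort_map_sum {k : ℕ} (μ : Finset (Fin (2 * k))) :
    ((μ.sort (· ≤ ·)).map (fun i => i.val / 2 + 1)).sum = ∑ i ∈ μ, (i.val / 2 + 1) := by
  rw [Finset.sum, ← Finset.sort_eq μ (· ≤ ·), Multiset.map_coe, Multiset.sum_coe]

theorem goodM_rho (k : ℕ) (μ : Finset (Fin (2 * k))) :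
    GoodM (rho k μ) ((red gi) ^ (∑ i ∈ μ, (i.val / 2 + 1))) (xMask μ) ∧ xMask μ < 2^k := by
  have h := goodM_list k (μ.sort (· ≤ ·))
  rw [sort_map_foldr, sort_map_sum] at h
  exact h

theorem goodM_mulVec {k : ℕ} {M : Matrix (Fin (2^k)) (Fin (2^k)) GaussianInt} {ε : Rbar}
    {mask : ℕ} (h : GoodM M ε mask) (hm : mask < 2^k) (v : Fin (2^k) → Rbar) (m : Fin (2^k)) :
    (M.map red).mulVec v m = ε * v ⟨(m : ℕ) ^^^ mask, Nat.xor_lt_two_pow m.isLt hm⟩ := by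
  rw [Matrix.mulVec, dotProduct]
  rw [Finset.sum_eq_single (⟨(m : ℕ) ^^^ mask, Nat.xor_lt_two_pow m.isLt hm⟩ : Fin (2^k))]
  · rw [Matrix.map_apply, h, if_pos rfl]
  · intro t _ ht
    rw [Matrix.map_apply, h, if_neg (fun hh => ht (Fin.ext hh)), zero_mul]
  · intro hh
    exact absurd (Finset.mem_univ _) hh

theorem switchAux_eq_xor (j m : ℕ) : switchAux j m = m ^^^ 2^j := by
  unfold switchAux
  have hP : (0:ℕ) < 2^(j+1) := Nat.two_pow_pos _
  have hPj : (0:ℕ) < 2^j := Nat.two_pow_pos _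
  have h2j : 2^j < 2^(j+1) := by rw [pow_succ]; omega
  have hm : m = 2^(j+1) * (m / 2^(j+1)) + m % 2^(j+1) := (Nat.div_add_mod _ _).symm
  have hx : m ^^^ 2^j = 2^(j+1) * (m / 2^(j+1)) + (m % 2^(j+1) ^^^ 2^j) := by
    conv_lhs => rw [hm]
    have := xor_split (b := j+1) (x := m / 2^(j+1)) (u := 0) (y := m % 2^(j+1)) (v := 2^j)
      (Nat.mod_lt _ hP) h2j
    simpa using this
  rw [hx]
  congr 1
  -- r ^^^ 2^j = (r + 2^j) % 2^(j+1) for r < 2^(j+1)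
  set r := m % 2^(j+1) with hr
  have hrlt : r < 2^(j+1) := Nat.mod_lt _ hP
  have hre : r = 2^j * (r / 2^j) + r % 2^j := (Nat.div_add_mod _ _).symm
  have hdlt : r / 2^j < 2 := Nat.div_lt_of_lt_mul (by rw [pow_succ] at hrlt; omega)
  have hrm : r % 2^j < 2^j := Nat.mod_lt _ hPj
  have hx2 : r ^^^ 2^j = 2^j * (r / 2^j ^^^ 1) + r % 2^j := by
    conv_lhs => rw [hre]
    have := xor_split (b := j) (x := r / 2^j) (u := 1) (y := r % 2^j) (v := 0) hrm hPj
    simpa using this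
  have hdd : r / 2^j = 0 ∨ r / 2^j = 1 := by
    generalize r / 2^j = q at hdlt ⊢
    omega
  rcases hdd with h0 | h1
  · rw [hx2, h0]
    rw [h0, Nat.mul_zero, Nat.zero_add] at hre
    have : (r + 2^j) % 2^(j+1) = r + 2^j := Nat.mod_eq_of_lt (by rw [pow_succ]; omega)
    rw [this]
    simp only [Nat.zero_xor]
    omega
  · rw [hx2, h1]
    rw [h1, Nat.mul_one] at hre
    have hre2 : r + 2^j = 2^(j+1) + r % 2^j := by rw [pow_succ]; omega
    rw [hre2, Nat.add_comm (2^(j+1)), Nat.add_mod_right,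
      Nat.mod_eq_of_lt (lt_trans hrm h2j)]
    simp [Nat.xor_self]

theorem switchPerm_apply (k j : ℕ) (hj : j < k) (m : Fin (2^k)) :
    ((switchPerm k j hj m : ℕ)) = (m : ℕ) ^^^ 2^j := switchAux_eq_xor j m.val

theorem cliff_list (k : ℕ) (c : Fin k → Bool) (L : List (Fin k)) (m : Fin (2^k)) :
    (((L.map (fun l => if c l then switchPerm k l.val l.isLt else 1)).prod) m : ℕ)
      = (m : ℕ) ^^^ (L.map (fun l => if c l then 2^(l : ℕ) else 0)).foldr (· ^^^ ·) 0 := by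
  induction L with
  | nil => simp
  | cons l L ih =>
    simp only [List.map_cons, List.prod_cons, List.foldr_cons, Equiv.Perm.mul_apply]
    by_cases h : c l
    · rw [if_pos h, if_pos h, switchPerm_apply, ih, Nat.xor_assoc,
        Nat.xor_comm _ (2 ^ (l : ℕ))]
    · rw [if_neg h, if_neg h, Equiv.Perm.one_apply, ih, Nat.zero_xor]

/-- The xor-mask of the permutation `cliffPerm k c`. -/
def cMaskL (k : ℕ) (c : Fin k → Bool) : ℕ :=
  ((List.finRange k).map (fun l => if c l then 2^(l : ℕ) else 0)).foldr (· ^^^ ·) 0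

theorem cliffPerm_apply (k : ℕ) (c : Fin k → Bool) (m : Fin (2^k)) :
    ((cliffPerm k c m : ℕ)) = (m : ℕ) ^^^ cMaskL k c := by
  rw [cliffPerm, List.ofFn_eq_map]
  exact cliff_list k c (List.finRange k) m

theorem cMaskL_lt (k : ℕ) (c : Fin k → Bool) : cMaskL k c < 2^k := by
  have h := cliffPerm_apply k c ⟨0, Nat.two_pow_pos k⟩
  simp only [Fin.val_mk, Nat.zero_xor] at h
  rw [← h]
  exact (cliffPerm k c ⟨0, Nat.two_pow_pos k⟩).isLt

theorem finRange_map_val {α : Type*} (k : ℕ) (f : ℕ → α) :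
    (List.finRange k).map (fun l : Fin k => f l.val) = (List.range k).map f := by
  apply List.ext_getElem
  · simp
  · intro i h1 h2
    simp

theorem foldr_xor_init (L : List ℕ) (x : ℕ) :
    L.foldr (· ^^^ ·) x = L.foldr (· ^^^ ·) 0 ^^^ x := by
  induction L with
  | nil => simp
  | cons a L ih => simp [ih, Nat.xor_assoc]

theorem rangeAux : ∀ (k : ℕ) (mask : ℕ), mask < 2^k →
    ((List.range k).map (fun l => if mask.testBit l then 2^l else 0)).foldr (· ^^^ ·) 0
      = mask := by
  intro k
  induction k with
  | zero => intro mask h; interval_cases mask; simp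
  | succ k ih =>
    intro mask h
    rw [List.range_succ, List.map_append, List.foldr_append]
    have hmod : mask % 2^k < 2^k := Nat.mod_lt _ (Nat.two_pow_pos k)
    have hcongr : (List.range k).map (fun l => if mask.testBit l then 2^l else 0)
        = (List.range k).map (fun l => if (mask % 2^k).testBit l then 2^l else 0) := by
      apply List.map_congr_left
      intro l hl
      rw [List.mem_range] at hl
      rw [Nat.testBit_mod_two_pow]
      simp [hl]
    rw [hcongr, foldr_xor_init, ih _ hmod]
    simp only [List.map_cons, List.map_nil, List.foldr_cons, List.foldr_nil, Nat.xor_zero]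
    have hdm := Nat.div_add_mod mask (2^k)
    have hdiv : mask / 2^k < 2 := Nat.div_lt_of_lt_mul (by rw [pow_succ] at h; exact h)
    rw [Nat.testBit_eq_decide_div_mod_eq]
    by_cases h1 : mask / 2^k = 1
    · rw [if_pos (by simp [h1])]
      rw [h1, Nat.mul_one] at hdm
      have hx : (mask % 2^k) ^^^ 2^k = 2^k + mask % 2^k := by
        have := xor_split (b := k) (x := 0) (u := 1) (y := mask % 2^k) (v := 0) hmod
          (Nat.two_pow_pos k)
        simpa using this
      omega
    · have h0 : mask / 2^k = 0 := by generalize mask / 2^k = q at hdiv h1 ⊢; omega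
      rw [if_neg (by simp [h0])]
      rw [h0, Nat.mul_zero] at hdm
      simpa using hdm

theorem cMaskL_testBit (k mask : ℕ) (h : mask < 2^k) :
    cMaskL k (fun l => mask.testBit l.val) = mask := by
  rw [cMaskL]
  have hb : ((List.finRange k).map
        (fun l : Fin k => if mask.testBit l.val then 2^(l : ℕ) else 0))
      = (List.range k).map (fun l => if mask.testBit l then 2^l else 0) :=
    finRange_map_val k (fun l => if mask.testBit l then 2^l else 0)
  rw [hb]
  exact rangeAux k mask h

/-- Build a subset `μ` realizing the bit pattern `c` (pairs `{2l, 2l+1}` for each set bit). -/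
def gSet (k : ℕ) (c : Fin k → Bool) : List (Fin k) → Finset (Fin (2 * k))
  | [] => ∅
  | l :: t =>
      if c l then
        insert ⟨2 * l.val, by have := l.isLt; omega⟩
          (insert ⟨2 * l.val + 1, by have := l.isLt; omega⟩ (gSet k c t))
      else gSet k c t

theorem gSet_spec (k : ℕ) (c : Fin k → Bool) :
    ∀ L : List (Fin k), L.Pairwise (· < ·) →
      (∑ i ∈ gSet k c L, (i.val / 2 + 1)) % 2 = 0 ∧
      xMask (gSet k c L) = (L.map (fun l => if c l then 2^(l : ℕ) else 0)).foldr (· ^^^ ·) 0 ∧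
      (∀ x ∈ gSet k c L, ∃ l ∈ L, c l = true ∧
        ((x : Fin (2 * k)).val = 2 * l.val ∨ (x : Fin (2 * k)).val = 2 * l.val + 1)) := by
  intro L
  induction L with
  | nil => simp [gSet, xMask]
  | cons l t ih =>
    intro hp
    rw [List.pairwise_cons] at hp
    obtain ⟨hlt, hpt⟩ := hp
    obtain ⟨ihs, ihm, ihmem⟩ := ih hpt
    by_cases h : c l
    · have hbm : (⟨2 * l.val + 1, by have := l.isLt; omega⟩ : Fin (2 * k)) ∉ gSet k c t := by
        intro hmem
        obtain ⟨l', hl', _, hor⟩ := ihmem _ hmem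
        have := hlt l' hl'
        rw [Fin.lt_def] at this
        simp only [Fin.val_mk] at hor
        omega
      have ham : (⟨2 * l.val, by have := l.isLt; omega⟩ : Fin (2 * k)) ∉
          insert (⟨2 * l.val + 1, by have := l.isLt; omega⟩ : Fin (2 * k)) (gSet k c t) := by
        intro hmem
        rw [Finset.mem_insert] at hmem
        rcases hmem with heq | hmem
        · rw [Fin.ext_iff] at heq
          simp at heq
        · obtain ⟨l', hl', _, hor⟩ := ihmem _ hmem
          have := hlt l' hl'
          rw [Fin.lt_def] at this
          simp only [Fin.val_mk] at hor
          omega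
      simp only [gSet, if_pos h]
      refine ⟨?_, ?_, ?_⟩
      · rw [Finset.sum_insert ham, Finset.sum_insert hbm]
        simp only [Fin.val_mk]
        have e1 : 2 * l.val / 2 = l.val := by omega
        have e2 : (2 * l.val + 1) / 2 = l.val := by omega
        rw [e1, e2]
        omega
      · rw [xMask, Finset.fold_insert ham, Finset.fold_insert hbm]
        have e1 : gMask (⟨2 * l.val, by have := l.isLt; omega⟩ : Fin (2 * k)) = 2^l.val - 1 := by
          simp only [gMask, Fin.val_mk]
          have h1 : 2 * l.val % 2 = 0 := by omega
          have h2 : 2 * l.val / 2 = l.val := by omega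
          rw [h1, h2, Nat.mul_zero, Nat.zero_add]
        have e2 : gMask (⟨2 * l.val + 1, by have := l.isLt; omega⟩ : Fin (2 * k))
            = 2^l.val + (2^l.val - 1) := by
          simp only [gMask, Fin.val_mk]
          have : (2 * l.val + 1) / 2 = l.val := by omega
          have h2 : (2 * l.val + 1) % 2 = 1 := by omega
          rw [this, h2, Nat.mul_one]
        rw [e1, e2, ← xMask, ihm, List.map_cons, List.foldr_cons, if_pos h]
        rw [← Nat.xor_assoc]
        congr 1
        have := xor_split (b := l.val) (x := 0) (u := 1) (y := 2^l.val - 1) (v := 2^l.val - 1)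
          (by have := Nat.two_pow_pos l.val; omega) (by have := Nat.two_pow_pos l.val; omega)
        simp only [Nat.mul_zero, Nat.zero_add, Nat.mul_one, Nat.zero_xor, Nat.xor_self,
          Nat.add_zero] at this
        rw [this]
      · intro x hx
        rw [Finset.mem_insert, Finset.mem_insert] at hx
        rcases hx with rfl | rfl | hx
        · exact ⟨l, List.mem_cons_self, h, Or.inl rfl⟩
        · exact ⟨l, List.mem_cons_self, h, Or.inr rfl⟩
        · obtain ⟨l', hl', hc', hor⟩ := ihmem _ hx
          exact ⟨l', List.mem_cons_of_mem _ hl', hc', hor⟩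
    · simp only [gSet, if_neg h]
      refine ⟨ihs, ?_, ?_⟩
      · rw [ihm, List.map_cons, List.foldr_cons, if_neg h, Nat.zero_xor]
      · intro x hx
        obtain ⟨l', hl', hc', hor⟩ := ihmem _ hx
        exact ⟨l', List.mem_cons_of_mem _ hl', hc', hor⟩

theorem main_part1 (k : ℕ) (μ : Finset (Fin (2 * k))) :
    ∃ ε ∈ ({1, red gi} : Set Rbar), ∃ c : Fin k → Bool,
      ∀ v : Fin (2 ^ k) → Rbar, ∀ m : Fin (2 ^ k),
        (rhoBar k μ).mulVec v m = ε * v (cliffPerm k c m) := by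
  obtain ⟨hg, hlt⟩ := goodM_rho k μ
  refine ⟨(red gi) ^ (∑ i ∈ μ, (i.val / 2 + 1)), giPow_mem _,
    fun l => (xMask μ).testBit l.val, ?_⟩
  intro v m
  rw [rhoBar, goodM_mulVec hg hlt v m]
  congr 2
  apply Fin.ext
  rw [cliffPerm_apply, cMaskL_testBit _ _ hlt]

theorem main_part3 (k : ℕ) (hk : 1 ≤ k) :
    ∀ ε ∈ ({1, red gi} : Set Rbar), ∀ c : Fin k → Bool, ∃ μ : Finset (Fin (2 * k)),
      ∀ v : Fin (2 ^ k) → Rbar, ∀ m : Fin (2 ^ k),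
        (rhoBar k μ).mulVec v m = ε * v (cliffPerm k c m) := by
  intro ε hε c
  obtain ⟨hsum, hmask, hmem⟩ := gSet_spec k c (List.finRange k) (List.pairwise_lt_finRange k)
  set G := gSet k c (List.finRange k) with hG
  have hmaskc : xMask G = cMaskL k c := by rw [hmask]; rfl
  have hz : (0:ℕ) < 2 * k := by omega
  set z : Fin (2 * k) := ⟨0, hz⟩ with hzdef
  have hgz : gMask z = 0 := by simp [gMask, hzdef]
  have hwz : z.val / 2 + 1 = 1 := by simp [hzdef]
  -- helper to conclude from a candidate μ
  have key : ∀ μ : Finset (Fin (2 * k)),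
      (red gi) ^ (∑ i ∈ μ, (i.val / 2 + 1)) = ε → xMask μ = cMaskL k c →
      ∀ v : Fin (2 ^ k) → Rbar, ∀ m : Fin (2 ^ k),
        (rhoBar k μ).mulVec v m = ε * v (cliffPerm k c m) := by
    intro μ hε' hm' v m
    obtain ⟨hg, hlt⟩ := goodM_rho k μ
    rw [rhoBar, goodM_mulVec hg hlt v m, hε']
    congr 2
    apply Fin.ext
    rw [cliffPerm_apply]
    show (m : ℕ) ^^^ xMask μ = (m : ℕ) ^^^ cMaskL k c
    rw [hm']
  simp only [Set.mem_insert_iff, Set.mem_singleton_iff] at hε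
  rcases hε with rfl | rfl
  · refine ⟨G, key G ?_ hmaskc⟩
    rw [giPow, if_pos hsum]
  · by_cases hzin : z ∈ G
    · have hGi : insert z (G.erase z) = G := Finset.insert_erase hzin
      have hsum2 : ∑ i ∈ G, (i.val / 2 + 1)
          = 1 + ∑ i ∈ G.erase z, (i.val / 2 + 1) := by
        conv_lhs => rw [← hGi]
        rw [Finset.sum_insert (Finset.notMem_erase _ _), hwz]
      have hmask2 : xMask G = xMask (G.erase z) := by
        conv_lhs => rw [xMask, ← hGi]
        rw [Finset.fold_insert (Finset.notMem_erase _ _), hgz, Nat.zero_xor, xMask]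
      refine ⟨G.erase z, key _ ?_ (by rw [← hmask2, hmaskc])⟩
      rw [giPow, if_neg (by omega)]
    · have hsum2 : ∑ i ∈ insert z G, (i.val / 2 + 1)
          = 1 + ∑ i ∈ G, (i.val / 2 + 1) := by
        rw [Finset.sum_insert hzin, hwz]
      have hmask2 : xMask (insert z G) = xMask G := by
        rw [xMask, Finset.fold_insert hzin, hgz, Nat.zero_xor, xMask]
      refine ⟨insert z G, key _ ?_ (by rw [hmask2, hmaskc])⟩
      rw [giPow, if_neg (by omega)]

theorem main_part2 (k : ℕ) :
    ∀ ε₁ ∈ ({1, red gi} : Set Rbar), ∀ ε₂ ∈ ({1, red gi} : Set Rbar),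
      ∀ c₁ c₂ : Fin k → Bool,
        (∀ v : Fin (2 ^ k) → Rbar, ∀ m : Fin (2 ^ k),
          ε₁ * v (cliffPerm k c₁ m) = ε₂ * v (cliffPerm k c₂ m)) →
        ε₁ = ε₂ ∧ cliffPerm k c₁ = cliffPerm k c₂ := by
  intro ε₁ hε₁ ε₂ hε₂ c₁ c₂ h
  simp only [Set.mem_insert_iff, Set.mem_singleton_iff] at hε₁ hε₂
  have hne1 : ε₁ ≠ 0 := by rcases hε₁ with rfl | rfl
                           · exact one_ne_zero_Rbar
                           · exact red_gi_ne_zero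
  have heps : ε₁ = ε₂ := by
    have h0 := h (fun _ => 1) ⟨0, Nat.two_pow_pos k⟩
    simpa using h0
  refine ⟨heps, ?_⟩
  apply Equiv.ext
  intro m
  by_contra hne2
  have h1 := h (fun x => if x = cliffPerm k c₁ m then 1 else 0) m
  rw [if_pos rfl, if_neg (fun hh => hne2 hh.symm), mul_one, mul_zero] at h1
  exact hne1 h1
/-- Every Clifford action `ρₖ(e_μ) mod 2ℤ[i]` on 2-torsion points coincides with a map
`v ↦ (m ↦ ε·v(σ m))` for a scalar `ε ∈ {1, i}` and an induced Clifford permutation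
`σ = S_k ∘ ⋯ ∘ S_1` (each `S_l ∈ {identity, A_{2^{l−1}}}`); distinct pairs `(ε, σ)` give
distinct maps; and every such pair arises, so the correspondence is a bijection between the
`2^{k+1}` mod-2 reductions and the `2^{k+1}` pairs. -/
theorem rhoBar_eq_scaled_perm (k : ℕ) (hk : 1 ≤ k) :
    (∀ μ : Finset (Fin (2 * k)), ∃ ε ∈ ({1, red gi} : Set Rbar), ∃ c : Fin k → Bool,
      ∀ v : Fin (2 ^ k) → Rbar, ∀ m : Fin (2 ^ k),
        (rhoBar k μ).mulVec v m = ε * v (cliffPerm k c m)) ∧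
    (∀ ε₁ ∈ ({1, red gi} : Set Rbar), ∀ ε₂ ∈ ({1, red gi} : Set Rbar),
      ∀ c₁ c₂ : Fin k → Bool,
        (∀ v : Fin (2 ^ k) → Rbar, ∀ m : Fin (2 ^ k),
          ε₁ * v (cliffPerm k c₁ m) = ε₂ * v (cliffPerm k c₂ m)) →
        ε₁ = ε₂ ∧ cliffPerm k c₁ = cliffPerm k c₂) ∧
    (∀ ε ∈ ({1, red gi} : Set Rbar), ∀ c : Fin k → Bool, ∃ μ : Finset (Fin (2 * k)),
      ∀ v : Fin (2 ^ k) → Rbar, ∀ m : Fin (2 ^ k),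
        (rhoBar k μ).mulVec v m = ε * v (cliffPerm k c m)) := by
  exact ⟨main_part1 k, main_part2 k, main_part3 k hk⟩

end DiracSpinor
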